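/- arXiv:2401.08094 — 4 statements merged into one kernel-verified Lean document; each statement's English description precedes it below -/
import Mathlib

section
/- Let γ > 0, M ≥ 1, and let g be convex and differentiable with g' ≥ 1 and g not the identity (so M·g'(0) > 1 when M > 1). Define d = (1/γ)·ln(M·g'(0)), and for x > d let I(x) ∈ (0,x) be the unique solution of e^{γ(x−I(x))} = M·g'(I(x)); set I(x) = 0 for x ≤ d. Then for any d < x₁ < x₂, we have I(x₁) < I(x₂); i.e., I is strictly increasing on (d, ∞). -/
open Set Real

/-- The candidate optimal indemnity `I` (zero below the deductible `d`, and solving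
`e^{γ(x − I x)} = M g'(I x)` with `I x ∈ (0,x)` above it) is strictly increasing
on `(d, ∞)`. -/
theorem indemnity_strictMono (γ M d : ℝ) (g I : ℝ → ℝ)
    (hγ : 0 < γ) (hM : 1 < M)
    (hconv : ConvexOn ℝ univ g) (hdiff : Differentiable ℝ g)
    (hg' : ∀ y, 1 ≤ deriv g y)
    (hd : d = Real.log (M * deriv g 0) / γ)
    (hI0 : ∀ x ≤ d, I x = 0)
    (hIin : ∀ x, d < x → I x ∈ Ioo 0 x)
    (hIeq : ∀ x, d < x → Real.exp (γ * (x - I x)) = M * deriv g (I x)) :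
    ∀ x₁ x₂, d < x₁ → x₁ < x₂ → I x₁ < I x₂ := by
  intro x₁ x₂ h1 h12
  by_contra h
  push_neg at h
  have hmono : MonotoneOn (deriv g) (univ : Set ℝ) :=
    hconv.monotoneOn_deriv (fun x _ => hdiff x)
  have hg : deriv g (I x₂) ≤ deriv g (I x₁) := by
    apply hmono (by simp) (by simp) h
  have h2 : d < x₂ := h1.trans h12
  have he : Real.exp (γ * (x₂ - I x₂)) ≤ Real.exp (γ * (x₁ - I x₁)) := by
    rw [hIeq x₁ h1, hIeq x₂ h2]
    have hMpos : (0:ℝ) < M := lt_trans one_pos hM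
    exact mul_le_mul_of_nonneg_left hg hMpos.le
  have := Real.exp_le_exp.mp he
  have hx : x₂ - I x₂ ≤ x₁ - I x₁ := le_of_mul_le_mul_left this hγ
  linarith
end

section
/- With the same setup, for any d < x₁ < x₂, the retained loss satisfies x₁ − I(x₁) ≤ x₂ − I(x₂); i.e., x − I(x) is non-decreasing on (d,∞). Hence 0 ≤ I(x₂) − I(x₁) ≤ x₂ − x₁ for all d < x₁ ≤ x₂ (1-Lipschitz, increasing: the comonotonicity condition). -/
open Set Real

/-- The retained loss `x − I x` is non-decreasing on `(d, ∞)`; hence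
`0 ≤ I(x₂) − I(x₁) ≤ x₂ − x₁` for all `d < x₁ ≤ x₂` (comonotonicity). -/
theorem indemnity_comonotone_above_deductible (γ M d : ℝ) (g I : ℝ → ℝ)
    (hγ : 0 < γ) (hM : 1 < M)
    (hconv : ConvexOn ℝ univ g) (hdiff : Differentiable ℝ g)
    (hg' : ∀ y, 1 ≤ deriv g y)
    (hd : d = Real.log (M * deriv g 0) / γ)
    (hI0 : ∀ x ≤ d, I x = 0)
    (hIin : ∀ x, d < x → I x ∈ Ioo 0 x)
    (hIeq : ∀ x, d < x → Real.exp (γ * (x - I x)) = M * deriv g (I x)) :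
    (∀ x₁ x₂, d < x₁ → x₁ < x₂ → x₁ - I x₁ ≤ x₂ - I x₂) ∧
    (∀ x₁ x₂, d < x₁ → x₁ ≤ x₂ → 0 ≤ I x₂ - I x₁ ∧ I x₂ - I x₁ ≤ x₂ - x₁) := by
  have hM0 : 0 < M := lt_trans one_pos hM
  have hmono : Monotone (deriv g) := by
    have := hconv.monotoneOn_deriv (fun x _ => hdiff x)
    intro a b hab
    exact this (mem_univ a) (mem_univ b) hab
  -- key: retained loss monotone
  have key : ∀ x₁ x₂, d < x₁ → x₁ < x₂ → x₁ - I x₁ ≤ x₂ - I x₂ := by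
    intro x₁ x₂ h1 h12
    by_contra hlt
    push_neg at hlt
    -- exp(γ(x₁-I x₁)) > exp(γ(x₂-I x₂))
    have hexp : Real.exp (γ * (x₂ - I x₂)) < Real.exp (γ * (x₁ - I x₁)) :=
      Real.exp_lt_exp.mpr (by nlinarith)
    rw [hIeq x₁ h1, hIeq x₂ (lt_trans h1 h12)] at hexp
    have hderiv : deriv g (I x₂) < deriv g (I x₁) := by
      have := (mul_lt_mul_iff_right₀ hM0).mp hexp
      exact this
    have hII : I x₂ < I x₁ := by
      by_contra hge
      push_neg at hge
      exact absurd (hmono hge) (not_le.mpr hderiv)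
    linarith
  have keyI : ∀ x₁ x₂, d < x₁ → x₁ < x₂ → I x₁ ≤ I x₂ := by
    intro x₁ x₂ h1 h12
    by_contra hlt
    push_neg at hlt
    have hderiv : deriv g (I x₂) ≤ deriv g (I x₁) := hmono hlt.le
    have hexp : Real.exp (γ * (x₂ - I x₂)) ≤ Real.exp (γ * (x₁ - I x₁)) := by
      rw [hIeq x₁ h1, hIeq x₂ (lt_trans h1 h12)]
      exact mul_le_mul_of_nonneg_left hderiv hM0.le
    have := Real.exp_le_exp.mp hexp
    nlinarith
  refine ⟨key, fun x₁ x₂ h1 h12 => ?_⟩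
  rcases eq_or_lt_of_le h12 with rfl | hlt
  · simp
  · constructor
    · linarith [keyI x₁ x₂ h1 hlt]
    · linarith [key x₁ x₂ h1 hlt]
end

section
/- With the same setup, if 0 ≤ x₁ ≤ d < x₂, then x₁ ≤ x₂ − I(x₂); i.e., the retained loss at x₂ is at least any x below the deductible d. Consequently I, extended by 0 on [0,d], satisfies 0 ≤ I(x') − I(x) ≤ x' − x for all 0 ≤ x ≤ x'. -/
open Set Real

/-- Below/above the deductible: if `0 ≤ x₁ ≤ d < x₂` then `x₁ ≤ x₂ − I x₂`;
consequently `I`, extended by `0` on `[0,d]`, satisfies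
`0 ≤ I(x') − I(x) ≤ x' − x` for all `0 ≤ x ≤ x'`. -/
theorem indemnity_comonotone (γ M d : ℝ) (g I : ℝ → ℝ)
    (hγ : 0 < γ) (hM : 1 < M)
    (hconv : ConvexOn ℝ univ g) (hdiff : Differentiable ℝ g)
    (hg' : ∀ y, 1 ≤ deriv g y)
    (hmono : MonotoneOn (deriv g) (Ici (0:ℝ)))
    (hd : d = Real.log (M * deriv g 0) / γ)
    (hI0 : ∀ x ≤ d, I x = 0)
    (hIin : ∀ x, d < x → I x ∈ Ioo 0 x)
    (hIeq : ∀ x, d < x → Real.exp (γ * (x - I x)) = M * deriv g (I x)) :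
    (∀ x₁ x₂, 0 ≤ x₁ → x₁ ≤ d → d < x₂ → x₁ ≤ x₂ - I x₂) ∧
    (∀ x x', 0 ≤ x → x ≤ x' → 0 ≤ I x' - I x ∧ I x' - I x ≤ x' - x) := by
  have hMg : 0 < M * deriv g 0 := mul_pos (by linarith) (by linarith [hg' 0])
  have hexpd : Real.exp (γ * d) = M * deriv g 0 := by
    have h : γ * d = Real.log (M * deriv g 0) := by rw [hd]; field_simp
    rw [h, Real.exp_log hMg]
  have retained : ∀ x, d < x → d ≤ x - I x := by
    intro x hx
    have h1 := hIin x hx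
    have h2 := hIeq x hx
    have hm : deriv g 0 ≤ deriv g (I x) :=
      hmono (mem_Ici.mpr le_rfl) (mem_Ici.mpr h1.1.le) h1.1.le
    have hle : Real.exp (γ * d) ≤ Real.exp (γ * (x - I x)) := by
      rw [hexpd, h2]; nlinarith
    have := Real.exp_le_exp.mp hle
    nlinarith
  have Imono : ∀ a b, d < a → a ≤ b → I a ≤ I b := by
    intro a b ha hab
    have hb : d < b := lt_of_lt_of_le ha hab
    by_contra h
    push_neg at h
    have hIa := hIin a ha
    have hIb := hIin b hb
    have hm : deriv g (I b) ≤ deriv g (I a) :=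
      hmono (mem_Ici.mpr hIb.1.le) (mem_Ici.mpr hIa.1.le) h.le
    have hle : Real.exp (γ * (b - I b)) ≤ Real.exp (γ * (a - I a)) := by
      rw [hIeq a ha, hIeq b hb]; nlinarith
    have := Real.exp_le_exp.mp hle
    nlinarith
  have retmono : ∀ a b, d < a → a ≤ b → a - I a ≤ b - I b := by
    intro a b ha hab
    have hb : d < b := lt_of_lt_of_le ha hab
    have hIa := hIin a ha
    have hIb := hIin b hb
    have hm : deriv g (I a) ≤ deriv g (I b) :=
      hmono (mem_Ici.mpr hIa.1.le) (mem_Ici.mpr hIb.1.le) (Imono a b ha hab)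
    have hle : Real.exp (γ * (a - I a)) ≤ Real.exp (γ * (b - I b)) := by
      rw [hIeq a ha, hIeq b hb]; nlinarith
    have := Real.exp_le_exp.mp hle
    nlinarith
  constructor
  · intro x₁ x₂ h0 h1 h2
    linarith [retained x₂ h2]
  · intro x x' hx hxx'
    rcases le_or_gt x' d with h | h
    · rw [hI0 x (le_trans hxx' h), hI0 x' h]
      constructor <;> linarith
    · rcases le_or_gt x d with h2 | h2
      · rw [hI0 x h2]
        have := retained x' h
        have := hIin x' h
        constructor <;> [linarith [this.1.le]; linarith]
      · exact ⟨by linarith [Imono x x' h2 hxx'], by linarith [retmono x x' h2 hxx']⟩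
end

section
/- With h as above, at any fixed point m̄ of h (i.e., h(m̄) = m̄ with m̄ > 1 and d(m̄) > 0 carrying positive F-mass), the derivative satisfies h'(m̄) < 1. Consequently H(m) = h(m) − m can only cross zero from above, and h has a unique fixed point M* in 𝓜. -/
open Set Real MeasureTheory

/-
`H = h - id` is continuous with `H 1 > 0 > H B`, so it has a zero. At a zero `m`, `g'' ≥ 0`
bounds the integrand of `h'(m)` by `g'(I_m x) = e^{γ(x - I_m x)} / m`, so
`h'(m) ≤ (h m - A) / m < 1`, where `A > 0` is the integral of `e^{γx}` over `[0, d m]`.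
Thus `H` crosses zero only downwards, and a continuous function doing so has at most one zero.
Measurability of `I_m` comes from its monotonicity, which follows from convexity of `g`.
-/

lemma HasDerivAt.exists_lt_right {f : ℝ → ℝ} {l c b : ℝ} (hf : HasDerivAt f l c)
    (hl : l < 0) (hcb : c < b) : ∃ x ∈ Ioo c b, f x < f c := by
  obtain ⟨x, hslope, hx⟩ :=
    (((hf.hasDerivWithinAt (s := Ioi c)).limsup_slope_le' (lt_irrefl c) hl).and
      (Ioo_mem_nhdsGT hcb)).exists
  rw [slope_def_field, div_neg_iff] at hslope
  refine ⟨x, hx, ?_⟩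
  rcases hslope with ⟨-, hxc⟩ | ⟨hfx, -⟩
  · linarith [hx.1]
  · linarith

lemma HasDerivAt.exists_gt_left {f : ℝ → ℝ} {l a c : ℝ} (hf : HasDerivAt f l c)
    (hl : l < 0) (hac : a < c) : ∃ x ∈ Ioo a c, f c < f x := by
  obtain ⟨x, hslope, hx⟩ :=
    (((hf.hasDerivWithinAt (s := Iio c)).limsup_slope_le' (lt_irrefl c) hl).and
      (Ioo_mem_nhdsLT hac)).exists
  rw [slope_def_field, div_neg_iff] at hslope
  refine ⟨x, hx, ?_⟩
  rcases hslope with ⟨hfx, -⟩ | ⟨-, hxc⟩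
  · linarith
  · linarith [hx.2]

lemma subsingleton_zeros_of_hasDerivAt_neg {H : ℝ → ℝ} {a b : ℝ}
    (hcont : ContinuousOn H (Icc a b))
    (hderiv : ∀ c ∈ Icc a b, H c = 0 → ∃ l < 0, HasDerivAt H l c) :
    {c ∈ Icc a b | H c = 0}.Subsingleton := by
  suffices ∀ c₁ ∈ {c ∈ Icc a b | H c = 0}, ∀ c₂ ∈ {c ∈ Icc a b | H c = 0},
      ¬c₁ < c₂ by
    intro c₁ h₁ c₂ h₂
    exact le_antisymm (not_lt.mp (this c₂ h₂ c₁ h₁)) (not_lt.mp (this c₁ h₁ c₂ h₂))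
  rintro c₁ ⟨hc₁, hH₁⟩ c₂ ⟨hc₂, hH₂⟩ hlt
  obtain ⟨l₁, hl₁, hd₁⟩ := hderiv c₁ hc₁ hH₁
  obtain ⟨a', ha', hHa'⟩ := hd₁.exists_lt_right hl₁ hlt
  rw [hH₁] at hHa'
  have hsub : Icc a' c₂ ⊆ Icc a b := Icc_subset_Icc (hc₁.1.trans ha'.1.le) hc₂.2
  -- `c` is the first point after `a'` where `H` becomes nonnegative.
  set S := Icc a' c₂ ∩ H ⁻¹' Ici 0
  have hS_closed : IsClosed S :=
    (hcont.mono hsub).preimage_isClosed_of_isClosed isClosed_Icc isClosed_Ici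
  have hc₂S : c₂ ∈ S := ⟨⟨ha'.2.le, le_rfl⟩, hH₂.ge⟩
  have hbdd : BddBelow S := bddBelow_Icc.mono inter_subset_left
  set c := sInf S
  have hcS : c ∈ S := hS_closed.csInf_mem ⟨c₂, hc₂S⟩ hbdd
  have hneg : ∀ x ∈ Ico a' c, H x < 0 := fun x hx =>
    not_le.mp fun hHx => (csInf_le hbdd ⟨⟨hx.1, hx.2.le.trans hcS.1.2⟩, hHx⟩).not_gt hx.2
  have hHc_nonneg : 0 ≤ H c := hcS.2
  have ha'c : a' < c := lt_of_le_of_ne hcS.1.1 fun h => (h ▸ hHa').not_ge hHc_nonneg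
  have hHc : H c = 0 := by
    refine le_antisymm (not_lt.mp fun hpos => ?_) hHc_nonneg
    obtain ⟨z, hz, hHz⟩ := intermediate_value_Ioo ha'c.le
      ((hcont.mono hsub).mono (Icc_subset_Icc_right hcS.1.2)) ⟨hHa', hpos⟩
    exact (hneg z (Ioo_subset_Ico_self hz)).ne hHz
  obtain ⟨l, hl, hd⟩ := hderiv c (hsub hcS.1) hHc
  obtain ⟨x, hx, hHx⟩ := hd.exists_gt_left hl ha'c
  exact (hneg x (Ioo_subset_Ico_self hx)).not_gt (hHc ▸ hHx)

lemma monotoneOn_of_exp_sub_eq_mul {γ m : ℝ} {G I : ℝ → ℝ} {s : Set ℝ} (hγ : 0 < γ)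
    (hm : 0 ≤ m) (hG : Monotone G) (hI : ∀ x ∈ s, exp (γ * (x - I x)) = m * G (I x)) :
    MonotoneOn I s := by
  intro x hx y hy hxy
  by_contra! hlt
  have hexp_le : exp (γ * (y - I y)) ≤ exp (γ * (x - I x)) := by
    rw [hI x hx, hI y hy]
    exact mul_le_mul_of_nonneg_left (hG hlt.le) hm
  nlinarith [exp_le_exp.mp hexp_le]

lemma integrableOn_exp_mul_sub {μ : Measure ℝ} {γ : ℝ} {I : ℝ → ℝ} {s : Set ℝ}
    (hγ : 0 ≤ γ) (hexp : Integrable (fun x => exp (γ * x)) μ) (hs : MeasurableSet s)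
    (hI : AEMeasurable I (μ.restrict s)) (hI_nonneg : ∀ x ∈ s, 0 ≤ I x) :
    IntegrableOn (fun x => exp (γ * (x - I x))) s μ := by
  refine hexp.integrableOn.mono' ?_
    ((ae_restrict_iff' hs).mpr (.of_forall fun x hx => ?_))
  · exact (measurable_exp.comp_aemeasurable
      ((aemeasurable_id.sub hI).const_mul γ)).aestronglyMeasurable
  · rw [norm_of_nonneg (exp_pos _).le]
    exact exp_le_exp.mpr (mul_le_mul_of_nonneg_left (by linarith [hI_nonneg x hx]) hγ)

lemma one_le_integral_exp_mul {μ : Measure ℝ} [IsProbabilityMeasure μ] {γ : ℝ}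
    (hγ : 0 ≤ γ) (hsupp : μ (Iio 0) = 0) (hexp : Integrable (fun x => exp (γ * x)) μ) :
    1 ≤ ∫ x, exp (γ * x) ∂μ := by
  have hnonneg : ∀ᵐ x ∂μ, 0 ≤ x := measure_eq_zero_iff_ae_notMem.mp hsupp |>.mono
    fun x hx => not_lt.mp hx
  calc (1 : ℝ) = ∫ _, (1 : ℝ) ∂μ := by simp
    _ ≤ ∫ x, exp (γ * x) ∂μ :=
        integral_mono_of_nonneg (.of_forall fun _ => zero_le_one) hexp
          (hnonneg.mono fun x hx => one_le_exp (mul_nonneg hγ hx))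

lemma setIntegral_mul_sq_div_lt_one {μ : Measure ℝ} {γ m d : ℝ} {G G' I : ℝ → ℝ}
    (hγ : 0 < γ) (hm : 0 < m) (hexp : Integrable (fun x => exp (γ * x)) μ)
    (hG : Monotone G) (hG_pos : ∀ y, 0 < G y) (hG' : ∀ y, 0 ≤ G' y)
    (hI_nonneg : ∀ x, d < x → 0 ≤ I x)
    (hI : ∀ x, d < x → exp (γ * (x - I x)) = m * G (I x))
    (hmass : μ (Icc 0 d) ≠ 0)
    (hfix : (∫ x in Icc 0 d, exp (γ * x) ∂μ) +
      ∫ x in Ioi d, exp (γ * (x - I x)) ∂μ = m) :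
    ∫ x in Ioi d, γ * G (I x) ^ 2 / (γ * G (I x) + G' (I x)) ∂μ < 1 := by
  have hI_mono : MonotoneOn I (Ioi d) := monotoneOn_of_exp_sub_eq_mul hγ hm.le hG hI
  have hint : IntegrableOn (fun x => exp (γ * (x - I x))) (Ioi d) μ :=
    integrableOn_exp_mul_sub hγ.le hexp measurableSet_Ioi
      (aemeasurable_restrict_of_monotoneOn measurableSet_Ioi hI_mono) hI_nonneg
  have hA : 0 < ∫ x in Icc 0 d, exp (γ * x) ∂μ := by
    have : NeZero (μ.restrict (Icc 0 d)) :=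
      ⟨by simpa [Measure.restrict_apply_univ] using hmass⟩
    exact integral_exp_pos hexp.integrableOn
  have hpointwise : ∀ x ∈ Ioi d,
      γ * G (I x) ^ 2 / (γ * G (I x) + G' (I x)) ≤ exp (γ * (x - I x)) / m := by
    intro x hx
    have ha := hG_pos (I x)
    have hb := hG' (I x)
    rw [hI x hx, mul_div_cancel_left₀ _ hm.ne', div_le_iff₀ (by positivity)]
    nlinarith
  calc ∫ x in Ioi d, γ * G (I x) ^ 2 / (γ * G (I x) + G' (I x)) ∂μ
      ≤ ∫ x in Ioi d, exp (γ * (x - I x)) / m ∂μ :=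
        setIntegral_mono_of_nonneg
          (fun x _ => by have := hG_pos (I x); have := hG' (I x); positivity)
          hpointwise (hint.div_const m)
    _ = (∫ x in Ioi d, exp (γ * (x - I x)) ∂μ) / m := integral_div m _
    _ < 1 := by rw [div_lt_one hm]; linarith

theorem h_fixed_point_unique_general (γ : ℝ) (hγ : 0 < γ)
    (μ : Measure ℝ) [IsProbabilityMeasure μ]
    (hsupp : μ (Iio (0:ℝ)) = 0)
    (hexp : Integrable (fun x => Real.exp (γ * x)) μ)
    (g : ℝ → ℝ)
    (hconv : ConvexOn ℝ univ g)
    (hg' : ∀ y, 1 ≤ deriv g y) (hg'' : ∀ y, 0 ≤ deriv (deriv g) y)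
    (d : ℝ → ℝ)
    (Im : ℝ → ℝ → ℝ)
    (hIin : ∀ m x, d m < x → Im m x ∈ Ioo 0 x)
    (hIeq : ∀ m x, d m < x → Real.exp (γ * (x - Im m x)) = m * deriv g (Im m x))
    (h : ℝ → ℝ)
    (hh : ∀ m, h m = (∫ x in Icc 0 (d m), Real.exp (γ * x) ∂μ) +
      ∫ x in Ioi (d m), Real.exp (γ * (x - Im m x)) ∂μ)
    (D : ℝ → ℝ)
    (hD : ∀ m, D m = ∫ x in Ioi (d m),
      γ * (deriv g (Im m x))^2 /
        (γ * deriv g (Im m x) + deriv (deriv g) (Im m x)) ∂μ)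
    (hderiv : ∀ m ∈ Icc (1:ℝ) (∫ x, Real.exp (γ * x) ∂μ), HasDerivAt h (D m) m)
    (hcont : ContinuousOn h (Icc 1 (∫ x, Real.exp (γ * x) ∂μ)))
    (hmass : ∀ m ∈ Icc (1:ℝ) (∫ x, Real.exp (γ * x) ∂μ), 0 < μ (Icc 0 (d m)))
    (hH1 : 1 < h 1)
    (hHB : h (∫ x, Real.exp (γ * x) ∂μ) < ∫ x, Real.exp (γ * x) ∂μ) :
    (∀ m' ∈ Ioo (1:ℝ) (∫ x, Real.exp (γ * x) ∂μ), h m' = m' → D m' < 1) ∧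
    ∃! Mstar, Mstar ∈ Icc (1:ℝ) (∫ x, Real.exp (γ * x) ∂μ) ∧ h Mstar = Mstar := by
  set B := ∫ x, exp (γ * x) ∂μ
  have hg'_mono : Monotone (deriv g) := monotoneOn_univ.mp <| hconv.monotoneOn_deriv
    fun x _ => differentiableAt_of_deriv_ne_zero (by linarith [hg' x])
  have hfix_lt : ∀ m ∈ Ioo 1 B, h m = m → D m < 1 := fun m hm hfix => by
    rw [hD]
    exact setIntegral_mul_sq_div_lt_one hγ (by linarith [hm.1]) hexp hg'_mono
      (fun y => by linarith [hg' y]) hg'' (fun x hx => (hIin m x hx).1.le) (hIeq m)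
      (hmass m (Ioo_subset_Icc_self hm)).ne' ((hh m).symm.trans hfix)
  have hfix_mem : ∀ m ∈ Icc 1 B, h m = m → m ∈ Ioo 1 B := fun m hm hfix =>
    ⟨hm.1.lt_of_ne (by rintro rfl; linarith), hm.2.lt_of_ne (by rintro rfl; linarith)⟩
  have hH_cont : ContinuousOn (fun m => h m - m) (Icc 1 B) := hcont.sub continuousOn_id
  obtain ⟨c, hc, hHc⟩ :=
    intermediate_value_Icc' (one_le_integral_exp_mul hγ.le hsupp hexp) hH_cont
      (show (0 : ℝ) ∈ Icc (h B - B) (h 1 - 1) from ⟨by linarith, by linarith⟩)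
  have hzeros := subsingleton_zeros_of_hasDerivAt_neg hH_cont fun m hm hHm =>
    have hfix : h m = m := sub_eq_zero.mp hHm
    ⟨D m - 1, by linarith [hfix_lt m (hfix_mem m hm hfix) hfix],
      (hderiv m hm).sub (hasDerivAt_id m)⟩
  exact ⟨hfix_lt, c, ⟨hc, sub_eq_zero.mp hHc⟩,
    fun y hy => hzeros ⟨hy.1, sub_eq_zero.mpr hy.2⟩ ⟨hc, hHc⟩⟩

/-- At any fixed point `m̄` of `h` (with `m̄ > 1` and positive `F`-mass on
`[0, d(m̄)]`), the derivative satisfies `h'(m̄) < 1`; consequently `H = h − id`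
can only cross zero from above, and `h` has a unique fixed point in `𝓜`. -/
theorem h_fixed_point_unique (γ : ℝ) (hγ : 0 < γ)
    (μ : Measure ℝ) [IsProbabilityMeasure μ]
    (hsupp : μ (Iio (0:ℝ)) = 0)
    (hexp : Integrable (fun x => Real.exp (γ * x)) μ)
    (g : ℝ → ℝ) (hg2 : ContDiff ℝ 2 g)
    (hconv : ConvexOn ℝ univ g)
    (hg' : ∀ y, 1 ≤ deriv g y) (hg'' : ∀ y, 0 ≤ deriv (deriv g) y)
    (d : ℝ → ℝ) (hd : ∀ m, d m = Real.log (m * deriv g 0) / γ)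
    (Im : ℝ → ℝ → ℝ)
    (hIin : ∀ m x, d m < x → Im m x ∈ Ioo 0 x)
    (hIeq : ∀ m x, d m < x → Real.exp (γ * (x - Im m x)) = m * deriv g (Im m x))
    (h : ℝ → ℝ)
    (hh : ∀ m, h m = (∫ x in Icc 0 (d m), Real.exp (γ * x) ∂μ) +
      ∫ x in Ioi (d m), Real.exp (γ * (x - Im m x)) ∂μ)
    (D : ℝ → ℝ)
    (hD : ∀ m, D m = ∫ x in Ioi (d m),
      γ * (deriv g (Im m x))^2 /
        (γ * deriv g (Im m x) + deriv (deriv g) (Im m x)) ∂μ)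
    (hderiv : ∀ m ∈ Icc (1:ℝ) (∫ x, Real.exp (γ * x) ∂μ), HasDerivAt h (D m) m)
    (hcont : ContinuousOn h (Icc 1 (∫ x, Real.exp (γ * x) ∂μ)))
    (hmass : ∀ m ∈ Icc (1:ℝ) (∫ x, Real.exp (γ * x) ∂μ), 0 < μ (Icc 0 (d m)))
    (hH1 : 1 < h 1)
    (hHB : h (∫ x, Real.exp (γ * x) ∂μ) < ∫ x, Real.exp (γ * x) ∂μ) :
    (∀ m' ∈ Ioo (1:ℝ) (∫ x, Real.exp (γ * x) ∂μ), h m' = m' → D m' < 1) ∧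
    ∃! Mstar, Mstar ∈ Icc (1:ℝ) (∫ x, Real.exp (γ * x) ∂μ) ∧ h Mstar = Mstar :=
  h_fixed_point_unique_general γ hγ μ hsupp hexp g hconv hg' hg'' d Im hIin hIeq h hh D hD hderiv
    hcont hmass hH1 hHB
end
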